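/- E' is contractible to a point within E: there exist a point g ∈ E and a continuous map R : [0,1] × E' → E such that R(0, f) = f for all f ∈ E' and R(1, f) = g for all f ∈ E'. (One may take g = (g₁,…,gₙ) ∈ E with all components vanishing almost everywhere outside [0,1] and R(t, f) = (t g₁ + (1−t) f₁, …, t gₙ + (1−t) fₙ).) -/

import Mathlib

/-!
Take for `g` the indicators of the disjoint intervals `(1/(k+2), 1/(k+1)]`: they are pairwise
orthogonal in `L²`, hence independent, and vanish off `[0,1]`. For `t ≠ 0`, a relation
`∑ cᵢ (t gᵢ + (1-t) fᵢ) = 0` equates a function vanishing off `[0,1]` with one vanishing on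
`[0,1]`, so both are zero and `c = 0` by independence of `g`. At `t = 0` the homotopy is `f`.
-/

open MeasureTheory Set

/-- `H = L²([0,∞), ℝ)`. -/
noncomputable abbrev Hsp : Type :=
  MeasureTheory.Lp ℝ 2 (MeasureTheory.volume.restrict (Set.Ici (0 : ℝ)))

theorem LinearIndependent.add_of_disjoint {ι R M : Type*} [Ring R] [AddCommGroup M] [Module R M]
    {u w : ι → M} {U W : Submodule R M} (hu : LinearIndependent R u) (huU : ∀ i, u i ∈ U)
    (hwW : ∀ i, w i ∈ W) (hUW : Disjoint U W) : LinearIndependent R (u + w) := by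
  rw [linearIndependent_iff'] at hu ⊢
  intro s c hc
  have hsplit : ∑ i ∈ s, c i • u i = -∑ i ∈ s, c i • w i := by
    simpa only [Pi.add_apply, smul_add, Finset.sum_add_distrib, add_eq_zero_iff_eq_neg] using hc
  refine hu s c (Submodule.disjoint_def.mp hUW _ ?_ ?_)
  · exact U.sum_mem fun i _ => U.smul_mem _ (huU i)
  · rw [hsplit]
    exact W.neg_mem (W.sum_mem fun i _ => W.smul_mem _ (hwW i))

namespace MeasureTheory.Lp

variable {α 𝕜 E : Type*} [MeasurableSpace α] [NormedRing 𝕜] [NormedAddCommGroup E] [Module 𝕜 E]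
  [IsBoundedSMul 𝕜 E] {p : ENNReal} {μ : Measure α}

variable (𝕜 E p μ) in
def vanishingOn (s : Set α) : Submodule 𝕜 (Lp E p μ) where
  carrier := {f | f =ᵐ[μ.restrict s] 0}
  zero_mem' := ae_restrict_of_ae (Lp.coeFn_zero E p μ)
  add_mem' {f g} hf hg := by
    show _ =ᵐ[_] _
    filter_upwards [ae_restrict_of_ae (Lp.coeFn_add f g), hf, hg] with x hx hfx hgx
    rw [hx, Pi.add_apply, hfx, hgx, Pi.zero_apply, add_zero]
  smul_mem' c f hf := by
    show _ =ᵐ[_] _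
    filter_upwards [ae_restrict_of_ae (Lp.coeFn_smul c f), hf] with x hx hfx
    rw [hx, Pi.smul_apply, hfx, Pi.zero_apply, smul_zero]

theorem mem_vanishingOn {s : Set α} {f : Lp E p μ} :
    f ∈ vanishingOn 𝕜 E p μ s ↔ f =ᵐ[μ.restrict s] 0 := Iff.rfl

theorem disjoint_vanishingOn_compl (s : Set α) :
    Disjoint (vanishingOn 𝕜 E p μ s) (vanishingOn 𝕜 E p μ sᶜ) := by
  refine Submodule.disjoint_def.mpr fun f hs hsc => Lp.eq_zero_iff_ae_eq_zero.mpr ?_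
  have := (ae_restrict_union_iff s sᶜ _).mpr ⟨hs, hsc⟩
  rwa [union_compl_self, Measure.restrict_univ] at this

theorem indicatorConstLp_mem_vanishingOn_compl {s t : Set α} (hs : MeasurableSet s)
    (ht : MeasurableSet t) (hμs : μ s ≠ ⊤) (hst : s ⊆ t) (c : E) :
    indicatorConstLp p hs hμs c ∈ vanishingOn 𝕜 E p μ tᶜ := by
  rw [mem_vanishingOn, Filter.EventuallyEq, ae_restrict_iff' ht.compl]
  filter_upwards [indicatorConstLp_coeFn_notMem (p := p) (hs := hs) (hμs := hμs) (c := c)]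
    with x hx hxt using hx fun hxs => hxt (hst hxs)

end MeasureTheory.Lp

namespace MeasureTheory.L2

theorem linearIndependent_indicatorConstLp_one {ι α 𝕜 : Type*} [RCLike 𝕜] [MeasurableSpace α]
    {μ : Measure α} {s : ι → Set α} (hs : ∀ i, MeasurableSet (s i)) (hμs : ∀ i, μ (s i) ≠ ⊤)
    (hμs₀ : ∀ i, μ (s i) ≠ 0) (hdisj : Pairwise (Function.onFun Disjoint s)) :
    LinearIndependent 𝕜 fun i => indicatorConstLp 2 (hs i) (hμs i) (1 : 𝕜) := by
  refine linearIndependent_of_ne_zero_of_inner_eq_zero (fun i hi => ?_) fun i j hij => ?_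
  · have hnorm :=
      inner_indicatorConstLp_one_indicatorConstLp_one (𝕜 := 𝕜) (hs i) (hs i) (hμs i) (hμs i)
    rw [hi, inner_zero_left, inter_self, eq_comm, RCLike.ofReal_eq_zero,
      measureReal_eq_zero_iff (hμs i)] at hnorm
    exact hμs₀ i hnorm
  · dsimp only
    rw [inner_indicatorConstLp_one_indicatorConstLp_one (hs i) (hs j) (hμs i) (hμs j),
      (hdisj hij).inter_eq, measureReal_empty, RCLike.ofReal_zero]

end MeasureTheory.L2

def invSuccIoc (k : ℕ) : Set ℝ := Ioc ((k + 2 : ℝ)⁻¹) ((k + 1 : ℝ)⁻¹)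

theorem pairwise_disjoint_invSuccIoc : Pairwise (Function.onFun Disjoint invSuccIoc) := by
  have hanti : Antitone fun k : ℕ => (k + 1 : ℝ)⁻¹ := fun a b hab => by
    dsimp only
    gcongr
  convert hanti.pairwise_disjoint_on_Ioc_succ using 3 with k
  simp only [invSuccIoc, Order.succ_eq_add_one, Nat.cast_add_one]
  ring_nf

theorem invSuccIoc_subset_Icc (k : ℕ) : invSuccIoc k ⊆ Icc 0 1 := by
  refine Ioc_subset_Icc_self.trans (Icc_subset_Icc (by positivity) ?_)
  exact inv_le_one_of_one_le₀ (by linarith [k.cast_nonneg (α := ℝ)])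

theorem volume_invSuccIoc_ne_zero (k : ℕ) : volume (invSuccIoc k) ≠ 0 := by
  rw [invSuccIoc, Real.volume_Ioc, ne_eq, ENNReal.ofReal_eq_zero, not_le, sub_pos]
  gcongr
  norm_num

theorem stmt8_general (n : ℕ) :
    ∃ g : Fin n → Hsp, LinearIndependent ℝ g ∧
      ∃ R : Set.Icc (0 : ℝ) 1 ×
          {f : Fin n → Hsp // LinearIndependent ℝ f ∧
            ∀ i, (f i : ℝ → ℝ) =ᵐ[MeasureTheory.volume.restrict (Set.Icc (0 : ℝ) 1)] 0}
          → (Fin n → Hsp),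
        Continuous R ∧
        (∀ p, LinearIndependent ℝ (R p)) ∧
        (∀ (t : Set.Icc (0 : ℝ) 1) (f), (t : ℝ) = 0 → R (t, f) = (f : Fin n → Hsp)) ∧
        (∀ (t : Set.Icc (0 : ℝ) 1) (f), (t : ℝ) = 1 → R (t, f) = g) := by
  have hsub (k : ℕ) : invSuccIoc k ⊆ Ici 0 := (invSuccIoc_subset_Icc k).trans Icc_subset_Ici_self
  have hfin (k : ℕ) : volume.restrict (Ici (0 : ℝ)) (invSuccIoc k) ≠ ⊤ := by
    rw [Measure.restrict_eq_self _ (hsub k)]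
    exact measure_Ioc_lt_top.ne
  set g : Fin n → Hsp := fun i => indicatorConstLp 2 measurableSet_Ioc (hfin i) (1 : ℝ)
  have hg : LinearIndependent ℝ g :=
    (L2.linearIndependent_indicatorConstLp_one (s := invSuccIoc) (fun k => measurableSet_Ioc) hfin
      (fun k => by rw [Measure.restrict_eq_self _ (hsub k)]; exact volume_invSuccIoc_ne_zero k)
      pairwise_disjoint_invSuccIoc).comp _ Fin.val_injective
  refine ⟨g, hg, fun p => (p.1 : ℝ) • g + (1 - (p.1 : ℝ)) • p.2.1, by fun_prop, ?_,
    fun t f ht => by simp [ht], fun t f ht => by simp [ht]⟩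
  rintro ⟨t, f, hf, hf₀⟩
  rcases eq_or_ne (t : ℝ) 0 with ht | ht
  · simpa [ht] using hf
  have hrestrict :
      (volume.restrict (Ici (0 : ℝ))).restrict (Icc 0 1) = volume.restrict (Icc 0 1) := by
    rw [Measure.restrict_restrict measurableSet_Icc, inter_eq_left.mpr Icc_subset_Ici_self]
  refine LinearIndependent.add_of_disjoint (hg.units_smul fun _ => Units.mk0 _ ht)
    (U := Lp.vanishingOn ℝ ℝ 2 _ (Icc 0 1)ᶜ) (W := Lp.vanishingOn ℝ ℝ 2 _ (Icc 0 1))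
    (fun i => Submodule.smul_mem _ _ ?_) (fun i => Submodule.smul_mem _ _ ?_)
    (Lp.disjoint_vanishingOn_compl _).symm
  · exact Lp.indicatorConstLp_mem_vanishingOn_compl _ measurableSet_Icc _
      (invSuccIoc_subset_Icc i) _
  · rw [Lp.mem_vanishingOn, hrestrict]
    exact hf₀ i

/-- `E'` is contractible to a point within `E`: there exist a point
`g ∈ E` and a continuous map `R : [0,1] × E' → E` with `R(0,f) = f` and
`R(1,f) = g` for all `f ∈ E'`. -/
theorem stmt8 (n : ℕ) (hn : 1 ≤ n) :
    ∃ g : Fin n → Hsp, LinearIndependent ℝ g ∧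
      ∃ R : Set.Icc (0 : ℝ) 1 ×
          {f : Fin n → Hsp // LinearIndependent ℝ f ∧
            ∀ i, (f i : ℝ → ℝ) =ᵐ[MeasureTheory.volume.restrict (Set.Icc (0 : ℝ) 1)] 0}
          → (Fin n → Hsp),
        Continuous R ∧
        (∀ p, LinearIndependent ℝ (R p)) ∧
        (∀ (t : Set.Icc (0 : ℝ) 1) (f), (t : ℝ) = 0 → R (t, f) = (f : Fin n → Hsp)) ∧
        (∀ (t : Set.Icc (0 : ℝ) 1) (f), (t : ℝ) = 1 → R (t, f) = g) :=
  stmt8_general n
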